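/- arXiv:1507.05145 — 6 statements merged into one kernel-verified Lean document; each statement's English description precedes it below -/
import Mathlib

section
/- Let M₁, ..., Mₙ ∈ UT_d(ℤ) with n ≥ 2d, and let m = max{|Mᵢ| : 1 ≤ i ≤ n}, where |M| denotes the sum of absolute values of all entries of M. Then |M₁M₂⋯Mₙ| ≤ d + (d-1)·C(n, d-1)·d^(2(d-2))·m^(d-1). -/
/-!
Write `Mₖ = 1 + Nₖ` with `Nₖ` strictly upper triangular. Expanding the product gives
`∑ₜ eₜ`, where `eₜ` is the sum of the ordered products of `t` of the `Nₖ`. A product of `t`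
strictly upper triangular `d × d` matrices vanishes once `t ≥ d`, and the entrywise `ℓ¹`-norm is
submultiplicative, so `|eₜ| ≤ C(n, t) mᵗ`. Since `t ≤ d - 1 ≤ n / 2`, each of the `d - 1` surviving
terms with `t ≥ 1` is at most `C(n, d - 1) m^(d - 1)`, and `e₀ = 1` contributes `d`.
-/

open Finset Matrix

theorem Nat.choose_le_choose_of_le_half_left {n r s : ℕ} (hrs : r ≤ s) (hs : s ≤ n / 2) :
    n.choose r ≤ n.choose s := by
  induction s, hrs using Nat.le_induction with
  | base => rfl
  | succ s _ ih => exact (ih (by omega)).trans (Nat.choose_le_succ_of_lt_half_left (by omega))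

namespace List

variable {R : Type*} [Semiring R]

def esymm (l : List R) (t : ℕ) : R := ((l.sublistsLen t).map List.prod).sum

@[simp]
theorem esymm_zero (l : List R) : l.esymm 0 = 1 := by
  simp [esymm]

theorem esymm_succ_cons (a : R) (l : List R) (t : ℕ) :
    (a :: l).esymm (t + 1) = l.esymm (t + 1) + a * l.esymm t := by
  simp [esymm, Function.comp_def, List.sum_map_mul_left]

theorem esymm_eq_zero_of_length_lt {l : List R} {t : ℕ} (h : l.length < t) : l.esymm t = 0 := by
  simp [esymm, sublistsLen_of_length_lt h]

theorem prod_one_add_eq_sum_esymm (l : List R) {N : ℕ} (hN : l.length < N) :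
    (l.map (1 + ·)).prod = ∑ t ∈ Finset.range N, l.esymm t := by
  induction l generalizing N with
  | nil =>
    obtain ⟨N, rfl⟩ := Nat.exists_eq_add_one.mpr hN
    simp [Finset.sum_range_succ', esymm_eq_zero_of_length_lt]
  | cons a l ih =>
    obtain ⟨N, rfl⟩ := Nat.exists_eq_add_one.mpr (Nat.zero_lt_of_lt hN)
    rw [length_cons, Nat.add_lt_add_iff_right] at hN
    rw [map_cons, prod_cons, Finset.sum_range_succ', esymm_zero]
    simp only [esymm_succ_cons, sum_add_distrib, ← mul_sum]
    have h_succ : (l.map (1 + ·)).prod = ∑ t ∈ Finset.range N, l.esymm (t + 1) + 1 := by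
      rw [ih (Nat.lt_succ_of_lt hN), Finset.sum_range_succ', esymm_zero]
    rw [← ih hN, add_right_comm, ← h_succ, add_mul, one_mul]

end List

namespace Matrix

section AbsSum

variable {ι κ μ : Type*} [Fintype ι] [Fintype κ] [Fintype μ]

def absSum (A : Matrix ι κ ℤ) : ℕ := ∑ i, ∑ j, (A i j).natAbs

@[simp]
theorem absSum_zero : absSum (0 : Matrix ι κ ℤ) = 0 := by
  simp [absSum]

theorem absSum_add_le (A B : Matrix ι κ ℤ) : absSum (A + B) ≤ absSum A + absSum B := by
  simp only [absSum, ← sum_add_distrib]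
  gcongr with i _ j _
  exact Int.natAbs_add_le _ _

theorem absSum_mul_le (A : Matrix ι κ ℤ) (B : Matrix κ μ ℤ) :
    absSum (A * B) ≤ absSum A * absSum B := by
  calc absSum (A * B) ≤ ∑ i, ∑ j, ∑ k, (A i k).natAbs * (B k j).natAbs := by
        unfold absSum
        gcongr with i _ j _
        simpa only [mul_apply, Int.natAbs_mul] using
          le_sum_of_subadditive Int.natAbs Int.natAbs_zero.le Int.natAbs_add_le univ
            fun k => A i k * B k j
    _ = ∑ i, ∑ k, (A i k).natAbs * ∑ j, (B k j).natAbs := by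
        simp_rw [mul_sum]
        exact sum_congr rfl fun i _ => sum_comm
    _ ≤ ∑ i, ∑ k, (A i k).natAbs * absSum B := by
        gcongr with i _ k _
        exact single_le_sum (f := fun k => ∑ j, (B k j).natAbs) (fun _ _ => Nat.zero_le _)
          (mem_univ k)
    _ = absSum A * absSum B := by
        simp only [absSum, sum_mul]

theorem absSum_list_prod_le [DecidableEq ι] {l : List (Matrix ι ι ℤ)} (hl : l ≠ []) {m : ℕ}
    (hm : ∀ A ∈ l, absSum A ≤ m) : absSum l.prod ≤ m ^ l.length := by
  have h_mul : ∀ A B : Matrix ι ι ℤ, absSum (A * B) ≤ absSum A * absSum B := absSum_mul_le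
  calc absSum l.prod ≤ (l.map absSum).prod :=
        List.le_prod_nonempty_of_submultiplicative absSum h_mul l hl
    _ ≤ m ^ l.length := by
        simpa using List.prod_le_pow_card (l.map absSum) m (by simpa using hm)

theorem absSum_sub_one_add_card [DecidableEq ι] {A : Matrix ι ι ℤ} (hA : ∀ i, A i i = 1) :
    absSum (A - 1) + Fintype.card ι = absSum A := by
  have h_entry : ∀ i j, ((A - 1) i j).natAbs + (if i = j then 1 else 0) = (A i j).natAbs := by
    intro i j
    by_cases h : i = j
    · subst h; simp [hA]
    · simp [h, one_apply_ne h]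
  simp only [absSum, ← h_entry, sum_add_distrib, sum_ite_eq, mem_univ, if_true, sum_const,
    card_univ, smul_eq_mul, mul_one]

theorem absSum_one [DecidableEq ι] :
    absSum (1 : Matrix ι ι ℤ) = Fintype.card ι := by
  simpa using (absSum_sub_one_add_card (A := (1 : Matrix ι ι ℤ)) fun i => one_apply_eq i).symm

end AbsSum

section Superdiag

variable {d : ℕ} {R : Type*} [Semiring R]

def VanishesBelowSuperdiag (k : ℕ) (A : Matrix (Fin d) (Fin d) R) : Prop :=
  ∀ i j : Fin d, (j : ℕ) < i + k → A i j = 0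

theorem vanishesBelowSuperdiag_one : VanishesBelowSuperdiag 0 (1 : Matrix (Fin d) (Fin d) R) :=
  fun _ _ h => one_apply_ne (Fin.ne_of_gt h)

theorem VanishesBelowSuperdiag.mul {k k' : ℕ} {A B : Matrix (Fin d) (Fin d) R}
    (hA : VanishesBelowSuperdiag k A) (hB : VanishesBelowSuperdiag k' B) :
    VanishesBelowSuperdiag (k + k') (A * B) := by
  intro i j hij
  rw [mul_apply]
  refine Finset.sum_eq_zero fun c _ => ?_
  by_cases hc : (c : ℕ) < i + k
  · rw [hA i c hc, zero_mul]
  · rw [hB c j (by omega), mul_zero]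

theorem vanishesBelowSuperdiag_list_prod {k : ℕ} {l : List (Matrix (Fin d) (Fin d) R)}
    (hl : ∀ A ∈ l, VanishesBelowSuperdiag k A) : VanishesBelowSuperdiag (l.length * k) l.prod := by
  induction l with
  | nil => simpa using vanishesBelowSuperdiag_one
  | cons A l ih =>
    simp only [List.forall_mem_cons] at hl
    simpa [add_mul, add_comm] using hl.1.mul (ih hl.2)

theorem VanishesBelowSuperdiag.eq_zero {k : ℕ} {A : Matrix (Fin d) (Fin d) R}
    (hA : VanishesBelowSuperdiag k A) (hk : d ≤ k) : A = 0 :=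
  ext fun i j => hA i j (by omega)

theorem esymm_eq_zero_of_vanishesBelowSuperdiag {t : ℕ} {l : List (Matrix (Fin d) (Fin d) R)}
    (hl : ∀ A ∈ l, VanishesBelowSuperdiag 1 A) (ht : d ≤ t) : l.esymm t = 0 := by
  refine List.sum_eq_zero fun P hP => ?_
  obtain ⟨l', hl', rfl⟩ := List.mem_map.1 hP
  obtain ⟨hsub, hlen⟩ := List.mem_sublistsLen.1 hl'
  refine (vanishesBelowSuperdiag_list_prod fun A hA => hl A (hsub.subset hA)).eq_zero ?_
  omega

end Superdiag

theorem absSum_esymm_le {d : ℕ} {l : List (Matrix (Fin d) (Fin d) ℤ)} {m : ℕ}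
    (hm : ∀ A ∈ l, absSum A ≤ m) (t : ℕ) :
    absSum (l.esymm (t + 1)) ≤ l.length.choose (t + 1) * m ^ (t + 1) := by
  have h_sublist : ∀ P ∈ (l.sublistsLen (t + 1)).map List.prod, absSum P ≤ m ^ (t + 1) := by
    intro P hP
    obtain ⟨l', hl', rfl⟩ := List.mem_map.1 hP
    obtain ⟨hsub, hlen⟩ := List.mem_sublistsLen.1 hl'
    rw [← hlen]
    exact absSum_list_prod_le (List.ne_nil_of_length_eq_add_one hlen)
      fun A hA => hm A (hsub.subset hA)
  calc absSum (l.esymm (t + 1))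
      ≤ (((l.sublistsLen (t + 1)).map List.prod).map absSum).sum :=
        List.le_sum_of_subadditive absSum absSum_zero.le absSum_add_le _
    _ ≤ (((l.sublistsLen (t + 1)).map List.prod).map absSum).length • m ^ (t + 1) :=
        List.sum_le_card_nsmul _ _ (by simpa only [List.forall_mem_map] using h_sublist)
    _ = l.length.choose (t + 1) * m ^ (t + 1) := by simp

theorem absSum_prod_one_add_le {d m : ℕ} {l : List (Matrix (Fin (d + 1)) (Fin (d + 1)) ℤ)}
    (hl : ∀ A ∈ l, VanishesBelowSuperdiag 1 A ∧ absSum A ≤ m) (hlen : 2 * d ≤ l.length) :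
    absSum (l.map (1 + ·)).prod ≤ d + 1 + d * l.length.choose d * m ^ d := by
  have h_expand : (l.map (1 + ·)).prod = ∑ t ∈ range d, l.esymm (t + 1) + 1 := by
    rw [List.prod_one_add_eq_sum_esymm l (Nat.lt_succ_self _), ← List.esymm_zero l,
      ← sum_range_succ']
    refine (sum_subset (range_subset_range.2 (by omega)) fun t _ ht => ?_).symm
    exact esymm_eq_zero_of_vanishesBelowSuperdiag (fun A hA => (hl A hA).1) (by simpa using ht)
  have h_term : ∀ t ∈ range d, absSum (l.esymm (t + 1)) ≤ l.length.choose d * m ^ d := by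
    intro t ht
    rw [mem_range] at ht
    refine (absSum_esymm_le (fun A hA => (hl A hA).2) t).trans (Nat.mul_le_mul ?_ ?_)
    · exact Nat.choose_le_choose_of_le_half_left ht (by omega)
    · rcases m.eq_zero_or_pos with rfl | hm
      · simp
      · exact Nat.pow_le_pow_right hm ht
  calc absSum (l.map (1 + ·)).prod
      ≤ ∑ t ∈ range d, absSum (l.esymm (t + 1)) + absSum (1 : Matrix (Fin (d + 1)) _ ℤ) := by
        rw [h_expand]
        exact (absSum_add_le _ _).trans <| Nat.add_le_add_right
          (le_sum_of_subadditive _ absSum_zero.le absSum_add_le _ _) _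
    _ ≤ d * (l.length.choose d * m ^ d) + (d + 1) := by
        rw [absSum_one, Fintype.card_fin]
        gcongr
        simpa using sum_le_card_nsmul _ _ _ h_term
    _ = d + 1 + d * l.length.choose d * m ^ d := by ring

end Matrix

/-- Bound on the entries of a product of unitriangular integer matrices. -/
theorem prod_unitriangular_norm_bound (d n : ℕ) (hn : 2 * d ≤ n)
    (M : Fin n → Matrix (Fin d) (Fin d) ℤ)
    (huni : ∀ k : Fin n, (∀ i j : Fin d, j < i → M k i j = 0) ∧ ∀ i : Fin d, M k i i = 1) :
    ∑ i : Fin d, ∑ j : Fin d, (((List.ofFn M).prod) i j).natAbs ≤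
      d + (d - 1) * Nat.choose n (d - 1) * d ^ (2 * (d - 2)) *
        (Finset.univ.sup fun k : Fin n => ∑ i : Fin d, ∑ j : Fin d, (M k i j).natAbs) ^ (d - 1) := by
  obtain _ | d := d
  · simp
  set m := univ.sup fun k => absSum (M k)
  have h_strict : ∀ k, VanishesBelowSuperdiag 1 (M k - 1) := by
    intro k i j hij
    rcases (Nat.lt_succ_iff.1 hij).lt_or_eq with h | h
    · simp [(huni k).1 i j h, one_apply_ne (Fin.ne_of_gt h)]
    · obtain rfl := Fin.ext h
      simp [(huni k).2]
  have h_norm : ∀ k, absSum (M k - 1) ≤ m := fun k =>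
    (Nat.le.intro (absSum_sub_one_add_card (huni k).2)).trans
      (le_sup (f := fun k => absSum (M k)) (mem_univ k))
  have h_ofFn : List.ofFn M = (List.ofFn fun k => M k - 1).map (1 + ·) := by
    simp [List.map_ofFn, Function.comp_def]
  have h_sharp := absSum_prod_one_add_le (m := m) (l := List.ofFn fun k => M k - 1)
    (by simpa using fun k => ⟨h_strict k, h_norm k⟩) (by rw [List.length_ofFn]; omega)
  rw [← h_ofFn, List.length_ofFn] at h_sharp
  calc absSum (List.ofFn M).prod ≤ d + 1 + d * n.choose d * m ^ d := h_sharp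
    _ ≤ d + 1 + d * n.choose d * (d + 1) ^ (2 * (d - 1)) * m ^ d := by
        gcongr _ + ?_ * _
        exact Nat.le_mul_of_pos_right _ (by positivity)
end

section
/- The product of n matrices from a fixed finite subset S of UT_d(ℤ) has every entry bounded in absolute value by a polynomial in n (with the polynomial depending only on S and d). -/
/-!
Write `C` for a bound on the entries of the matrices of `S` and `t = j - i`. By induction on the
number `n` of factors, the `(i, j)` entry of a product of `n` upper unitriangular matrices with
entries bounded by `C` is at most `(C n + 1) ^ t` in absolute value: multiplying on the left by one
more factor `A` gives `(A B) i j = B i j + ∑_{i < k ≤ j} A i k * B k j`, whose absolute value is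
at most `a ^ t + t C a ^ (t - 1) ≤ (a + C) ^ t` for `a = C n + 1` by Bernoulli's inequality.
Since `t < d`, the polynomial `(C X + 1) ^ d` bounds all entries.
-/

namespace Matrix

variable {d : ℕ}

lemma BlockTriangular.list_prod {R : Type*} [Semiring R] {L : List (Matrix (Fin d) (Fin d) R)}
    (hL : ∀ A ∈ L, A.BlockTriangular id) : L.prod.BlockTriangular id :=
  list_prod_mem (S := blockTriangularSubsemiring R id) hL

lemma mul_apply_eq_add_sum_Ioc {R : Type*} [NonAssocSemiring R]
    {A B : Matrix (Fin d) (Fin d) R} (hA : A.BlockTriangular id) (hA₁ : ∀ i, A i i = 1)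
    (hB : B.BlockTriangular id) {i j : Fin d} :
    (A * B) i j = B i j + ∑ k ∈ Finset.Ioc i j, A i k * B k j := by
  have hi : i ∉ Finset.Ioc i j := by simp
  rw [mul_apply, ← one_mul (B i j), ← hA₁ i,
    ← Finset.sum_insert (f := fun k ↦ A i k * B k j) hi]
  refine (Finset.sum_subset (Finset.subset_univ _) fun k _ hk ↦ ?_).symm
  simp only [Finset.mem_insert, Finset.mem_Ioc, not_or, not_and_or, not_lt, not_le] at hk
  obtain ⟨hki, hki' | hjk⟩ := hk
  · rw [hA (lt_of_le_of_ne hki' hki), zero_mul]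
  · rw [hB hjk, mul_zero]

lemma natAbs_mul_apply_le_add_pow {A B : Matrix (Fin d) (Fin d) ℤ} {a C : ℕ}
    (hA : A.BlockTriangular id) (hA₁ : ∀ i, A i i = 1) (hAC : ∀ i k, (A i k).natAbs ≤ C)
    (hB : B.BlockTriangular id) (hBa : ∀ k j, (B k j).natAbs ≤ a ^ (j - k : ℕ)) (ha : 1 ≤ a)
    (i j : Fin d) : ((A * B) i j).natAbs ≤ (a + C) ^ (j - i : ℕ) := by
  set t := (j - i : ℕ)
  have hterm : ∀ k ∈ Finset.Ioc i j, (A i k * B k j).natAbs ≤ C * a ^ (t - 1) := by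
    intro k hk
    rw [Finset.mem_Ioc, Fin.lt_def, Fin.le_def] at hk
    rw [Int.natAbs_mul]
    exact Nat.mul_le_mul (hAC i k) ((hBa k j).trans (Nat.pow_le_pow_right ha (by omega)))
  calc ((A * B) i j).natAbs
      ≤ (B i j).natAbs + ∑ k ∈ Finset.Ioc i j, (A i k * B k j).natAbs := by
        rw [mul_apply_eq_add_sum_Ioc hA hA₁ hB]
        exact (Int.natAbs_add_le _ _).trans (Nat.add_le_add_left (Int.natAbs_sum_le _ _) _)
    _ ≤ a ^ t + t * (C * a ^ (t - 1)) := by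
        gcongr
        · exact hBa i j
        · simpa [Fin.card_Ioc] using Finset.sum_le_card_nsmul _ _ _ hterm
    _ = a ^ t + t * a ^ (t - 1) * C := by ring
    _ ≤ (a + C) ^ t := pow_add_mul_le_add_pow (Nat.zero_le a) (Nat.zero_le _) t

lemma natAbs_list_prod_apply_le {L : List (Matrix (Fin d) (Fin d) ℤ)} {C : ℕ}
    (hL : ∀ A ∈ L, A.BlockTriangular id ∧ ∀ i, A i i = 1)
    (hLC : ∀ A ∈ L, ∀ i j, (A i j).natAbs ≤ C) (i j : Fin d) :
    (L.prod i j).natAbs ≤ (C * L.length + 1) ^ (j - i : ℕ) := by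
  induction L generalizing i j with
  | nil => by_cases h : i = j <;> simp [h]
  | cons A L ih =>
    simp only [List.mem_cons, forall_eq_or_imp] at hL hLC
    have hstep := natAbs_mul_apply_le_add_pow hL.1.1 hL.1.2 hLC.1
      (BlockTriangular.list_prod fun B hB ↦ (hL.2 B hB).1) (ih hL.2 hLC.2)
      (Nat.le_add_left 1 _) i j
    rw [List.prod_cons, List.length_cons]
    convert hstep using 2
    ring

end Matrix

/-- The entries of a product of `n` matrices from a fixed finite subset `S` of
`UT_d(ℤ)` are bounded in absolute value by a polynomial in `n` (depending only on `S` and `d`). -/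
theorem prod_from_finite_set_poly_bound (d : ℕ) (S : Finset (Matrix (Fin d) (Fin d) ℤ))
    (hS : ∀ A ∈ S, (∀ i j : Fin d, j < i → A i j = 0) ∧ ∀ i : Fin d, A i i = 1) :
    ∃ p : Polynomial ℕ, ∀ (n : ℕ) (M : Fin n → Matrix (Fin d) (Fin d) ℤ),
      (∀ k : Fin n, M k ∈ S) →
      ∀ i j : Fin d, (((List.ofFn M).prod) i j).natAbs ≤ p.eval n := by
  let entry (x : Matrix (Fin d) (Fin d) ℤ × Fin d × Fin d) : ℕ := (x.1 x.2.1 x.2.2).natAbs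
  set C := (S ×ˢ Finset.univ ×ˢ Finset.univ).sup entry
  have hC : ∀ A ∈ S, ∀ i j, (A i j).natAbs ≤ C := fun A hA i j ↦
    Finset.le_sup (f := entry) (b := (A, i, j)) (by simp [hA])
  refine ⟨(Polynomial.C C * Polynomial.X + 1) ^ d, fun n M hM i j ↦ ?_⟩
  have hmem : ∀ A ∈ List.ofFn M, A ∈ S := by
    simp only [List.mem_ofFn, forall_exists_index]
    rintro _ k rfl
    exact hM k
  have hbound := Matrix.natAbs_list_prod_apply_le
    (fun A hA ↦ ⟨fun i j ↦ (hS A (hmem A hA)).1 i j, (hS A (hmem A hA)).2⟩)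
    (fun A hA ↦ hC A (hmem A hA)) i j
  rw [List.length_ofFn] at hbound
  simpa using hbound.trans (Nat.pow_le_pow_right (Nat.succ_pos _) (by omega))
end

section
/- Let α = 1 + √2. If Σ_{i=0}^{n} xᵢ·α^{3i} = Σ_{i=0}^{m} yᵢ·α^{3i} with all xᵢ, yᵢ ∈ {0,1,...,5}, xₙ ≠ 0 and yₘ ≠ 0, then n = m and xᵢ = yᵢ for all 0 ≤ i ≤ n. -/
/-! Put `β = (1 + √2)³ = 7 + 5√2 > 6`. Both sides are then base-`β` expansions whose digits
are at most `5 < β`, and such expansions are unique: the digits below position `k` contribute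
less than `β ^ k`, so the leading positions must agree, and then the digits can be compared
one at a time from the top down. -/

open Finset

section Digits

variable {R : Type*} [CommRing R] [LinearOrder R] [IsStrictOrderedRing R] {b : R} {d e : ℕ → ℕ}

theorem sum_digit_mul_pow_nonneg (hb : 0 ≤ b) (k : ℕ) :
    0 ≤ ∑ i ∈ range k, (d i : R) * b ^ i :=
  sum_nonneg fun i _ => mul_nonneg (d i).cast_nonneg (pow_nonneg hb i)

theorem sum_digit_mul_pow_lt {k : ℕ} (hd : ∀ i < k, (d i : R) + 1 ≤ b) :
    ∑ i ∈ range k, (d i : R) * b ^ i < b ^ k := by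
  induction k with
  | zero => simp
  | succ k ih =>
    have hlow := ih fun i hi => hd i (by omega)
    have htop := hd k k.lt_succ_self
    have hbk : 0 ≤ b ^ k := pow_nonneg (by linarith [(d k).cast_nonneg (α := R)]) k
    rw [sum_range_succ, pow_succ]
    nlinarith

theorem pow_le_sum_digit_mul_pow {m : ℕ} (hb : 0 ≤ b) (hm : e m ≠ 0) :
    b ^ m ≤ ∑ i ∈ range (m + 1), (e i : R) * b ^ i := by
  have hlow := sum_digit_mul_pow_nonneg (d := e) hb m
  have htop : (1 : R) ≤ e m := by exact_mod_cast Nat.one_le_iff_ne_zero.mpr hm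
  rw [sum_range_succ]
  nlinarith [pow_nonneg hb m]

theorem le_of_sum_digit_mul_pow_eq {n m : ℕ} (hd : ∀ i ≤ n, (d i : R) + 1 ≤ b) (hm : e m ≠ 0)
    (heq : ∑ i ∈ range (n + 1), (d i : R) * b ^ i = ∑ i ∈ range (m + 1), (e i : R) * b ^ i) :
    m ≤ n := by
  have hb : 1 ≤ b := by linarith [hd 0 n.zero_le, (d 0).cast_nonneg (α := R)]
  by_contra! hnm
  have := sum_digit_mul_pow_lt (k := n + 1) fun i hi => hd i (by omega)
  have := pow_le_pow_right₀ hb (show n + 1 ≤ m from hnm)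
  have := pow_le_sum_digit_mul_pow (zero_le_one.trans hb) hm
  linarith

theorem digit_eq_of_sum_digit_mul_pow_eq {k : ℕ} (hd : ∀ i < k, (d i : R) + 1 ≤ b)
    (he : ∀ i < k, (e i : R) + 1 ≤ b)
    (heq : ∑ i ∈ range k, (d i : R) * b ^ i = ∑ i ∈ range k, (e i : R) * b ^ i) :
    ∀ i < k, d i = e i := by
  induction k with
  | zero => simp
  | succ k ih =>
    have hd' : ∀ i < k, (d i : R) + 1 ≤ b := fun i hi => hd i (by omega)
    have he' : ∀ i < k, (e i : R) + 1 ≤ b := fun i hi => he i (by omega)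
    have hdk := sum_digit_mul_pow_lt hd'
    have hek := sum_digit_mul_pow_lt he'
    have hb : 0 ≤ b := by linarith [hd k k.lt_succ_self, (d k).cast_nonneg (α := R)]
    have hbk : 0 ≤ b ^ k := pow_nonneg hb k
    have := sum_digit_mul_pow_nonneg (d := d) hb k
    have := sum_digit_mul_pow_nonneg (d := e) hb k
    rw [sum_range_succ, sum_range_succ] at heq
    -- a difference of at least one in the top digit outweighs all lower digits
    have htop : d k = e k := by
      by_contra hne
      rcases Nat.lt_or_gt_of_ne hne with h | h
      · have : (d k : R) + 1 ≤ e k := by exact_mod_cast h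
        nlinarith
      · have : (e k : R) + 1 ≤ d k := by exact_mod_cast h
        nlinarith
    rw [htop, add_left_inj] at heq
    intro i hi
    rcases Nat.lt_succ_iff_lt_or_eq.mp hi with hi | rfl
    · exact ih hd' he' heq i hi
    · exact htop

end Digits

theorem six_le_one_add_sqrt_two_pow_three : (6 : ℝ) ≤ (1 + √2) ^ 3 := by
  have h : (1 : ℝ) ≤ √2 := Real.one_le_sqrt.mpr (by norm_num)
  nlinarith [Real.sq_sqrt (show (0 : ℝ) ≤ 2 by norm_num)]

/-- Uniqueness of representations as sums of powers of `α = 1 + √2` at exponents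
divisible by 3 with digits in `{0,…,5}`. -/
theorem alpha_representation_unique (n m : ℕ) (x y : ℕ → ℕ)
    (hx : ∀ i ≤ n, x i ≤ 5) (hy : ∀ i ≤ m, y i ≤ 5)
    (hxn : x n ≠ 0) (hym : y m ≠ 0)
    (heq : ∑ i ∈ Finset.range (n + 1), (x i : ℝ) * (1 + Real.sqrt 2) ^ (3 * i)
         = ∑ i ∈ Finset.range (m + 1), (y i : ℝ) * (1 + Real.sqrt 2) ^ (3 * i)) :
    n = m ∧ ∀ i ≤ n, x i = y i := by
  simp_rw [pow_mul] at heq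
  have digit_lt {z : ℕ → ℕ} {k : ℕ} (hz : ∀ i ≤ k, z i ≤ 5) :
      ∀ i ≤ k, (z i : ℝ) + 1 ≤ (1 + √2) ^ 3 := fun i hi => by
    have : (z i : ℝ) ≤ 5 := by exact_mod_cast hz i hi
    linarith [six_le_one_add_sqrt_two_pow_three]
  obtain rfl : n = m := le_antisymm (le_of_sum_digit_mul_pow_eq (digit_lt hy) hxn heq.symm)
    (le_of_sum_digit_mul_pow_eq (digit_lt hx) hym heq)
  refine ⟨rfl, fun i hi => ?_⟩
  exact digit_eq_of_sum_digit_mul_pow_eq (fun i hi => digit_lt hx i (by omega))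
    (fun i hi => digit_lt hy i (by omega)) heq i (by omega)
end

section
/- In the discrete Heisenberg group H₃(ℤ), for matrices A₁, ..., A_l with entries Aᵢ[1,2] = aᵢ, Aᵢ[2,3] = bᵢ, Aᵢ[1,3] = cᵢ, and a target A with entries a, b, c, the equation A = A₁^{x₁}⋯A_l^{x_l} holds for (x₁,...,x_l) ∈ ℕ^l if and only if: a = Σᵢ aᵢxᵢ, b = Σᵢ bᵢxᵢ, and c = Σᵢ cᵢxᵢ + Σᵢ aᵢbᵢxᵢ(xᵢ-1)/2 + Σ_{i<j} aᵢbⱼxᵢxⱼ. -/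
private def H (a b c : ℤ) : Matrix (Fin 3) (Fin 3) ℤ :=
  !![1, a, c; 0, 1, b; 0, 0, 1]

private lemma H_eq {a b c a' b' c' : ℤ} (ha : a = a') (hb : b = b') (hc : c = c') :
    H a b c = H a' b' c' := by rw [ha, hb, hc]

private lemma H_one : H 0 0 0 = 1 := by
  rw [Matrix.one_fin_three]; rfl

private lemma H_mul (a b c a' b' c' : ℤ) :
    H a b c * H a' b' c' = H (a + a') (b + b') (c + c' + a * b') := by
  ext i j
  fin_cases i <;> fin_cases j <;>
    simp [H, Matrix.mul_apply, Fin.sum_univ_succ, Matrix.cons_val_zero, Matrix.cons_val_one,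
      Matrix.head_cons, Matrix.vecHead, Matrix.vecTail] <;> ring

private lemma H_inj_iff (a b c a' b' c' : ℤ) :
    H a b c = H a' b' c' ↔ (a = a' ∧ b = b' ∧ c = c') := by
  constructor
  · intro h
    have h1 := congrFun (congrFun h 0) 1
    have h2 := congrFun (congrFun h 1) 2
    have h3 := congrFun (congrFun h 0) 2
    simp [H, Matrix.vecHead, Matrix.vecTail] at h1 h2 h3
    exact ⟨h1, h2, h3⟩
  · rintro ⟨rfl, rfl, rfl⟩; rfl

private lemma H_pow (a b c : ℤ) (n : ℕ) :
    H a b c ^ n = H (n * a) (n * b) (n * c + a * b * ((n : ℤ) * ((n : ℤ) - 1) / 2)) := by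
  induction n with
  | zero => simpa using H_one.symm
  | succ n ih =>
    rw [pow_succ, ih, H_mul]
    obtain ⟨k, hk⟩ : (2 : ℤ) ∣ (n : ℤ) * ((n : ℤ) - 1) := by
      rcases Int.even_or_odd (n : ℤ) with h | h
      · exact h.two_dvd.mul_right _
      · obtain ⟨m, hm⟩ := h
        exact Dvd.dvd.mul_left ⟨m, by omega⟩ _
    have hk2 : ((n : ℤ) + 1) * ((n : ℤ) + 1 - 1) = 2 * (k + n) := by linarith [hk]
    refine H_eq (by push_cast; ring) (by push_cast; ring) ?_
    push_cast
    rw [hk, hk2, Int.mul_ediv_cancel_left _ (by norm_num : (2:ℤ) ≠ 0),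
      Int.mul_ediv_cancel_left _ (by norm_num : (2:ℤ) ≠ 0)]
    ring

private lemma H_prod (l : ℕ) (A B C : Fin l → ℤ) :
    (List.ofFn fun i => H (A i) (B i) (C i)).prod =
      H (∑ i, A i) (∑ i, B i)
        ((∑ i, C i) + ∑ i, ∑ j, if i < j then A i * B j else 0) := by
  induction l with
  | zero => simpa using H_one.symm
  | succ l ih =>
    rw [List.ofFn_succ, List.prod_cons]
    rw [ih (fun i => A i.succ) (fun i => B i.succ) (fun i => C i.succ), H_mul]
    refine H_eq (by rw [Fin.sum_univ_succ]) (by rw [Fin.sum_univ_succ]) ?_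
    have h0 : ∀ j : Fin l, (0 : Fin (l+1)) < j.succ := fun j => Fin.succ_pos j
    simp only [Fin.sum_univ_succ, Fin.succ_lt_succ_iff, h0, Fin.not_lt_zero, if_true, if_false,
      Finset.mul_sum]
    ring

/-- Knapsack in the Heisenberg group `H₃(ℤ)` reduces to a system of Diophantine
equations (two linear and one quadratic). -/
theorem heisenberg_knapsack_iff (l : ℕ) (a b c : Fin l → ℤ) (a₀ b₀ c₀ : ℤ)
    (x : Fin l → ℕ) :
    (List.ofFn fun i : Fin l =>
        (!![1, a i, c i; 0, 1, b i; 0, 0, 1] : Matrix (Fin 3) (Fin 3) ℤ) ^ x i).prod =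
      !![1, a₀, c₀; 0, 1, b₀; 0, 0, 1] ↔
    (a₀ = ∑ i : Fin l, a i * x i ∧
     b₀ = ∑ i : Fin l, b i * x i ∧
     c₀ = ∑ i : Fin l, c i * x i
        + ∑ i : Fin l, a i * b i * ((x i : ℤ) * ((x i : ℤ) - 1) / 2)
        + ∑ i : Fin l, ∑ j : Fin l, if i < j then a i * b j * x i * x j else 0) := by
  have key : (List.ofFn fun i : Fin l =>
      (!![1, a i, c i; 0, 1, b i; 0, 0, 1] : Matrix (Fin 3) (Fin 3) ℤ) ^ x i)
      = List.ofFn fun i : Fin l =>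
        H ((x i : ℤ) * a i) ((x i : ℤ) * b i)
          ((x i : ℤ) * c i + a i * b i * ((x i : ℤ) * ((x i : ℤ) - 1) / 2)) := by
    refine congrArg List.ofFn (funext fun i => ?_)
    rw [← H_pow]
    rfl
  rw [key, H_prod,
    show (!![1, a₀, c₀; 0, 1, b₀; 0, 0, 1] : Matrix (Fin 3) (Fin 3) ℤ) = H a₀ b₀ c₀ from rfl,
    H_inj_iff]
  have ea : (∑ i : Fin l, (x i : ℤ) * a i) = ∑ i : Fin l, a i * x i :=
    Finset.sum_congr rfl fun i _ => by ring
  have eb : (∑ i : Fin l, (x i : ℤ) * b i) = ∑ i : Fin l, b i * x i :=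
    Finset.sum_congr rfl fun i _ => by ring
  have ec : (∑ i : Fin l, ((x i : ℤ) * c i + a i * b i * ((x i : ℤ) * ((x i : ℤ) - 1) / 2)))
      + (∑ i : Fin l, ∑ j : Fin l, if i < j then ((x i : ℤ) * a i) * ((x j : ℤ) * b j) else 0)
      = ∑ i : Fin l, c i * x i
        + ∑ i : Fin l, a i * b i * ((x i : ℤ) * ((x i : ℤ) - 1) / 2)
        + ∑ i : Fin l, ∑ j : Fin l, if i < j then a i * b j * x i * x j else 0 := by
    rw [Finset.sum_add_distrib]
    congr 1
    · congr 1
      exact Finset.sum_congr rfl fun i _ => by ring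
    · exact Finset.sum_congr rfl fun i _ => Finset.sum_congr rfl fun j _ => by
        split <;> ring
  rw [ea, eb, ec]
  constructor <;> rintro ⟨h1, h2, h3⟩ <;> exact ⟨h1.symm, h2.symm, h3.symm⟩
end

section
/- Let H ≤ G be a subgroup, R ⊆ G a set of right coset representatives, and ρ: G → R the map with g ∈ H·ρ(g). If g₁, g₂ ∈ G satisfy ρ(g₁g₂) = ρ(g₁), then there exist h₁, h₂ ∈ H and r ∈ R such that g₁g₂ᵗ = h₁h₂ᵗr for every t ≥ 0. -/
/-- If `ρ(g₁g₂) = ρ(g₁)` then there are `h₁, h₂ ∈ H` and `r ∈ R` with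
`g₁g₂ᵗ = h₁h₂ᵗr` for every `t ≥ 0`. -/
theorem move_right {G : Type*} [Group G] (H : Subgroup G) (R : Set G) (ρ : G → G)
    (hρR : ∀ g : G, ρ g ∈ R) (hρH : ∀ g : G, g * (ρ g)⁻¹ ∈ H)
    (huniq : ∀ r₁ ∈ R, ∀ r₂ ∈ R, r₁ * r₂⁻¹ ∈ H → r₁ = r₂)
    (g₁ g₂ : G) (h : ρ (g₁ * g₂) = ρ g₁) :
    ∃ h₁ ∈ H, ∃ h₂ ∈ H, ∃ r ∈ R, ∀ t : ℕ, g₁ * g₂ ^ t = h₁ * h₂ ^ t * r := by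
  set r := ρ g₁ with hr
  have h₁H : g₁ * r⁻¹ ∈ H := hρH g₁
  have h12H : g₁ * g₂ * r⁻¹ ∈ H := h ▸ hρH (g₁ * g₂)
  have h₂H : r * g₂ * r⁻¹ ∈ H := by
    have := H.mul_mem (H.inv_mem h₁H) h12H
    simpa [mul_assoc] using this
  refine ⟨g₁ * r⁻¹, h₁H, r * g₂ * r⁻¹, h₂H, r, hρR g₁, fun t => ?_⟩
  have key : (r * g₂ * r⁻¹) ^ t = r * g₂ ^ t * r⁻¹ := by
    induction t with
    | zero => simp
    | succ n ih => rw [pow_succ, pow_succ, ih]; group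
  rw [key]; group
end

section
/- Let E = g₁^{x₁}⋯g_l^{x_l} be an exponential expression over a group G with variable set X. In G × ℤ^l, define h_x = (1, e_x) where e_x = Σ_{i: xᵢ = x} eᵢ, and hᵢ = (gᵢ, -eᵢ). Then for g ∈ G, there exists ν: X → ℤ with g₁^{ν(x₁)}⋯g_l^{ν(x_l)} = g if and only if (g, 0) ∈ Π_{x ∈ X} ⟨h_x⟩ · Π_{i=1}^l ⟨hᵢ⟩. -/
/-!
Projecting `(∏ₓ h_x^{a x}) · (∏ᵢ hᵢ^{b i})` to `G` gives `g₁^{b 1}⋯g_l^{b l}`, and projecting it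
to `ℤˡ` gives the vector `i ↦ a (xᵢ) - b i`. So the product is `(g, 0)` exactly when
`b = a ∘ x` and `g₁^{a(x₁)}⋯g_l^{a(x_l)} = g`, i.e. when `a` is a solution of `E = g`.
-/

theorem List.prod_ofFn_prodMk {M N : Type*} [Monoid M] [Monoid N] {n : ℕ}
    (f : Fin n → M) (u : Fin n → N) :
    (List.ofFn fun i => (f i, u i)).prod = ((List.ofFn f).prod, (List.ofFn u).prod) := by
  induction n with
  | zero => rfl
  | succ n ih => simp [List.ofFn_succ, ih]

theorem Multiplicative.prod_ofFn_ofAdd_zpow {A : Type*} [AddCommGroup A] {n : ℕ}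
    (v : Fin n → A) (k : Fin n → ℤ) :
    (List.ofFn fun i => Multiplicative.ofAdd (v i) ^ k i).prod =
      Multiplicative.ofAdd (∑ i, k i • v i) := by
  simp [List.prod_ofFn, ofAdd_sum]

theorem Finset.sum_zsmul_sum_fiber_single {ι κ : Type*} [Fintype ι] [DecidableEq ι]
    [Fintype κ] [DecidableEq κ] (var : ι → κ) (a : κ → ℤ) :
    ∑ x, a x • ∑ i ∈ univ.filter (fun i => var i = x), Pi.single i (1 : ℤ) =
      fun j => a (var j) := by
  calc ∑ x, a x • ∑ i ∈ univ.filter (fun i => var i = x), Pi.single i (1 : ℤ)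
      = ∑ x, ∑ i ∈ univ.filter (fun i => var i = x), Pi.single i (a (var i)) := by
        refine Finset.sum_congr rfl fun x _ => ?_
        rw [Finset.smul_sum]
        refine Finset.sum_congr rfl fun i hi => ?_
        rw [(Finset.mem_filter.1 hi).2, ← Pi.single_smul, smul_eq_mul, mul_one]
    _ = fun j => a (var j) := by
        rw [Finset.sum_fiberwise univ var fun i => Pi.single i (a (var i)),
          Finset.univ_sum_single]

theorem Finset.sum_zsmul_neg_single {ι : Type*} [Fintype ι] [DecidableEq ι] (b : ι → ℤ) :
    ∑ i, b i • -Pi.single i (1 : ℤ) = -b := by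
  simp_rw [smul_neg, ← Pi.single_smul, smul_eq_mul, mul_one, Finset.sum_neg_distrib,
    Finset.univ_sum_single]

theorem prod_cyclic_zpow_eq {G : Type*} [Group G] {l p : ℕ}
    (g : Fin l → G) (var : Fin l → Fin p) (a : Fin p → ℤ) (b : Fin l → ℤ) :
    (List.ofFn fun x : Fin p =>
          (((1 : G), Multiplicative.ofAdd
              (∑ i ∈ Finset.univ.filter (fun i : Fin l => var i = x),
                Pi.single i (1 : ℤ))) : G × Multiplicative (Fin l → ℤ)) ^ a x).prod *
      (List.ofFn fun i : Fin l =>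
          ((g i, Multiplicative.ofAdd (-(Pi.single i (1 : ℤ)))) :
            G × Multiplicative (Fin l → ℤ)) ^ b i).prod =
    ((List.ofFn fun i => g i ^ b i).prod,
      Multiplicative.ofAdd ((fun j => a (var j)) - b)) := by
  simp only [Prod.pow_mk, one_zpow, List.prod_ofFn_prodMk, Multiplicative.prod_ofFn_ofAdd_zpow,
    Finset.sum_zsmul_sum_fiber_single, Finset.sum_zsmul_neg_single, List.ofFn_const,
    List.prod_replicate, one_pow, Prod.mk_mul_mk, one_mul, ← ofAdd_add, sub_eq_add_neg]

/-- Solvability of an exponential expression `E = g₁^{x₁}⋯g_l^{x_l}` over `G` is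
equivalent to membership of `(g, 0)` in a product of cyclic subgroups of `G × ℤˡ`,
generated by `h_x = (1, e_x)` and `hᵢ = (gᵢ, -eᵢ)`. -/
theorem exp_expr_iff_prod_cyclic {G : Type*} [Group G] (l p : ℕ)
    (g : Fin l → G) (var : Fin l → Fin p) (g₀ : G) :
    (∃ ν : Fin p → ℤ, (List.ofFn fun i : Fin l => g i ^ ν (var i)).prod = g₀) ↔
    (∃ (a : Fin p → ℤ) (b : Fin l → ℤ),
      (List.ofFn fun x : Fin p =>
          (((1 : G), Multiplicative.ofAdd
              (∑ i ∈ Finset.univ.filter (fun i : Fin l => var i = x),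
                Pi.single i (1 : ℤ))) : G × Multiplicative (Fin l → ℤ)) ^ a x).prod *
      (List.ofFn fun i : Fin l =>
          ((g i, Multiplicative.ofAdd (-(Pi.single i (1 : ℤ)))) :
            G × Multiplicative (Fin l → ℤ)) ^ b i).prod =
      (g₀, 1)) := by
  simp only [prod_cyclic_zpow_eq, Prod.mk.injEq, ofAdd_eq_one, sub_eq_zero]
  constructor
  · rintro ⟨ν, hν⟩
    exact ⟨ν, fun i => ν (var i), hν, rfl⟩
  · rintro ⟨a, b, hprod, rfl⟩
    exact ⟨a, hprod⟩
end
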